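/- arXiv:1110.2348 — 2 statements merged into one kernel-verified Lean document; each statement's English description precedes it below -/
import Mathlib

section
/- For z ∈ ℂ with Re z > 0, the Fourier transform of the Bessel potential kernel G_z(x) = Γ(z/2)^{-1} ∫_0^∞ (4πt)^{-d/2} e^{-|x|²/(4t)} e^{-t} t^{z/2} dt/t satisfies 𝓕G_z(ξ) = (1 + |ξ|²)^{-z/2} for all ξ ∈ ℝ^d. -/
/-!
Writing `G_z = Γ(z/2)⁻¹ ∫₀^∞ e^{-t} t^{z/2-1} p_t dt` as a superposition of heat kernels
`p_t(x) = (4πt)^{-d/2} e^{-|x|²/4t}`, each of which has total mass `1` and Fourier transform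
`e^{-t|ξ|²}`, Fubini gives `𝓕G_z(ξ) = Γ(z/2)⁻¹ ∫₀^∞ t^{z/2-1} e^{-(1+|ξ|²)t} dt`, and this
Euler integral equals `(1+|ξ|²)^{-z/2}`.
-/

open MeasureTheory Set Complex Real

/-- The Bessel potential kernel
`G_z(x) = Γ(z/2)⁻¹ ∫_0^∞ (4πt)^{-d/2} e^{-|x|²/4t} e^{-t} t^{z/2} dt/t` on `ℝ^d`. -/
noncomputable def besselPotential (d : ℕ) (z : ℂ) (x : EuclideanSpace ℝ (Fin d)) : ℂ :=
  (Complex.Gamma (z / 2))⁻¹ *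
    ∫ t in Ioi (0 : ℝ),
      (((4 * π * t) ^ (-(d : ℝ) / 2) * Real.exp (-‖x‖ ^ 2 / (4 * t)) * Real.exp (-t) : ℝ) : ℂ)
        * (t : ℂ) ^ (z / 2) / (t : ℂ)

open Module
open scoped RealInnerProductSpace

lemma norm_cexp_neg_I_mul_ofReal (r : ℝ) : ‖cexp (-I * r)‖ = 1 := by
  simp [norm_exp]

section HeatKernel

variable {V : Type*} [NormedAddCommGroup V] [InnerProductSpace ℝ V]

noncomputable def heatKernel (t : ℝ) (x : V) : ℝ :=
  (4 * π * t) ^ (-(finrank ℝ V : ℝ) / 2) * rexp (-‖x‖ ^ 2 / (4 * t))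

lemma heatKernel_nonneg {t : ℝ} (ht : 0 ≤ t) (x : V) : 0 ≤ heatKernel t x := by
  unfold heatKernel; positivity

lemma continuousOn_uncurry_heatKernel :
    ContinuousOn (Function.uncurry (heatKernel : ℝ → V → ℝ)) (Ioi 0 ×ˢ univ) := by
  intro p hp
  have ht : 0 < p.1 := hp.1
  apply ContinuousAt.continuousWithinAt
  refine .mul (.rpow_const (by fun_prop) (.inl (by positivity))) ?_
  fun_prop (disch := positivity)

lemma heatKernel_mul_cexp_inner_eq (t : ℝ) (x ξ : V) :
    (heatKernel t x : ℂ) * cexp (-I * ⟪x, ξ⟫) = ((4 * π * t) ^ (-(finrank ℝ V : ℝ) / 2) : ℝ) *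
      cexp (-((4 * t)⁻¹ : ℝ) * ‖x‖ ^ 2 + -I * ⟪ξ, x⟫) := by
  rw [heatKernel, ofReal_mul, ofReal_exp, mul_assoc, ← Complex.exp_add, real_inner_comm]
  push_cast
  ring_nf

variable [FiniteDimensional ℝ V] [MeasurableSpace V] [BorelSpace V]

lemma integral_heatKernel {t : ℝ} (ht : 0 < t) : ∫ x : V, heatKernel t x = 1 := by
  simp_rw [heatKernel, neg_div _ (‖_‖ ^ 2), div_eq_inv_mul _ (4 * t), ← neg_mul]
  rw [integral_const_mul,
    GaussianFourier.integral_rexp_neg_mul_sq_norm (by positivity : 0 < (4 * t)⁻¹), div_inv_eq_mul,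
    show π * (4 * t) = 4 * π * t by ring, ← rpow_add (by positivity), neg_div, neg_add_cancel,
    rpow_zero]

lemma integrable_heatKernel {t : ℝ} (ht : 0 < t) : Integrable (heatKernel t : V → ℝ) :=
  .of_integral_ne_zero (by simp [integral_heatKernel ht])

lemma integral_heatKernel_mul_cexp_inner {t : ℝ} (ht : 0 < t) (ξ : V) :
    ∫ x : V, (heatKernel t x : ℂ) * cexp (-I * ⟪x, ξ⟫) = rexp (-(t * ‖ξ‖ ^ 2)) := by
  have h4πt : 0 < 4 * π * t := by positivity
  simp_rw [heatKernel_mul_cexp_inner_eq]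
  rw [integral_const_mul, GaussianFourier.integral_cexp_neg_mul_sq_norm_add (by simp; positivity),
    show (π : ℂ) / ((4 * t)⁻¹ : ℝ) = (4 * π * t : ℝ) by push_cast; field_simp,
    ofReal_cpow h4πt.le, ← mul_assoc, ← cpow_add _ _ (by exact_mod_cast h4πt.ne')]
  push_cast
  rw [neg_div, neg_add_cancel, cpow_zero, one_mul, neg_sq, I_sq]
  congr 1
  field_simp

lemma integrable_prod_mul_heatKernel_mul_cexp_inner {w : ℝ → ℂ} (hw : IntegrableOn w (Ioi 0))
    (ξ : V) :
    Integrable (fun p : ℝ × V ↦ w p.1 * heatKernel p.1 p.2 * cexp (-I * ⟪p.2, ξ⟫))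
      ((volume.restrict (Ioi 0)).prod volume) := by
  refine (integrable_prod_iff ?_).2 ⟨?_, ?_⟩
  · refine (hw.aestronglyMeasurable.comp_fst.mul ?_).mul
      (by fun_prop : Continuous _).aestronglyMeasurable
    rw [Measure.restrict_prod_eq_prod_univ]
    exact (continuous_ofReal.comp_continuousOn continuousOn_uncurry_heatKernel).aestronglyMeasurable
      (measurableSet_Ioi.prod .univ)
  · filter_upwards [ae_restrict_mem measurableSet_Ioi] with t ht
    exact ((integrable_heatKernel ht).ofReal.const_mul (w t)).mul_bdd (by fun_prop)
      (ae_of_all _ fun x ↦ (norm_cexp_neg_I_mul_ofReal _).le)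
  · refine hw.norm.congr ?_
    filter_upwards [ae_restrict_mem measurableSet_Ioi] with t ht
    simp_rw [norm_mul, norm_cexp_neg_I_mul_ofReal, mul_one, norm_real,
      Real.norm_of_nonneg (heatKernel_nonneg ht.le _)]
    rw [integral_const_mul, integral_heatKernel ht, mul_one]

theorem integral_integral_mul_heatKernel_mul_cexp_inner {w : ℝ → ℂ}
    (hw : IntegrableOn w (Ioi 0)) (ξ : V) :
    ∫ x : V, (∫ t in Ioi 0, w t * heatKernel t x) * cexp (-I * ⟪x, ξ⟫) =
      ∫ t in Ioi 0, w t * rexp (-(t * ‖ξ‖ ^ 2)) := by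
  calc ∫ x : V, (∫ t in Ioi 0, w t * heatKernel t x) * cexp (-I * ⟪x, ξ⟫)
      = ∫ x : V, ∫ t in Ioi 0, w t * heatKernel t x * cexp (-I * ⟪x, ξ⟫) := by
        simp_rw [← integral_mul_const]
    _ = ∫ t in Ioi 0, ∫ x : V, w t * heatKernel t x * cexp (-I * ⟪x, ξ⟫) :=
        (integral_integral_swap (integrable_prod_mul_heatKernel_mul_cexp_inner hw ξ)).symm
    _ = ∫ t in Ioi 0, w t * rexp (-(t * ‖ξ‖ ^ 2)) := by
        refine setIntegral_congr_fun measurableSet_Ioi fun t ht ↦ ?_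
        simp_rw [mul_assoc, integral_const_mul, integral_heatKernel_mul_cexp_inner ht]

end HeatKernel

lemma integral_exp_neg_mul_cpow_mul_exp_neg_mul_Ioi {s : ℂ} (hs : 0 < s.re) {a : ℝ} (ha : 0 ≤ a) :
    ∫ t in Ioi 0, rexp (-t) * (t : ℂ) ^ (s - 1) * rexp (-(t * a)) = Gamma s * (1 + a) ^ (-s) := by
  have h1a : 0 < 1 + a := by positivity
  calc ∫ t in Ioi 0, rexp (-t) * (t : ℂ) ^ (s - 1) * rexp (-(t * a))
      = ∫ t : ℝ in Ioi 0, (t : ℂ) ^ (s - 1) * cexp (-((1 + a : ℝ) * t)) := by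
        refine setIntegral_congr_fun measurableSet_Ioi fun t _ ↦ ?_
        push_cast
        rw [mul_right_comm, mul_comm, ← Complex.exp_add]
        ring_nf
    _ = Gamma s * (1 + a) ^ (-s) := by
        rw [integral_cpow_mul_exp_neg_mul_Ioi hs h1a, mul_comm, one_div,
          inv_cpow _ _ (by rw [arg_ofReal_of_nonneg h1a.le]; exact pi_ne_zero.symm), ← cpow_neg, ofReal_add, ofReal_one]

lemma besselPotential_eq_integral_heatKernel (d : ℕ) (z : ℂ) (x : EuclideanSpace ℝ (Fin d)) :
    besselPotential d z x =
      ∫ t in Ioi 0, (Gamma (z / 2))⁻¹ * (rexp (-t) * (t : ℂ) ^ (z / 2 - 1)) * heatKernel t x := by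
  rw [besselPotential, ← integral_const_mul]
  refine setIntegral_congr_fun measurableSet_Ioi fun t (ht : 0 < t) ↦ ?_
  rw [cpow_sub _ _ (ofReal_ne_zero.mpr ht.ne'), cpow_one, heatKernel, finrank_euclideanSpace_fin]
  push_cast
  ring

theorem stmt5 (d : ℕ) (z : ℂ) (hz : 0 < z.re) (ξ : EuclideanSpace ℝ (Fin d)) :
    ∫ x : EuclideanSpace ℝ (Fin d),
        besselPotential d z x * Complex.exp (-Complex.I * ((inner ℝ x ξ : ℝ))) =
      ((1 : ℂ) + (‖ξ‖ ^ 2 : ℝ)) ^ (-z / 2) := by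
  have hz2 : 0 < (z / 2).re := by simpa using hz
  have hw : IntegrableOn (fun t : ℝ ↦ (Gamma (z / 2))⁻¹ * (rexp (-t) * (t : ℂ) ^ (z / 2 - 1)))
      (Ioi 0) := (Complex.GammaIntegral_convergent hz2).const_mul _
  simp_rw [besselPotential_eq_integral_heatKernel]
  rw [integral_integral_mul_heatKernel_mul_cexp_inner hw]
  simp_rw [mul_assoc (Complex.Gamma _)⁻¹, integral_const_mul]
  rw [integral_exp_neg_mul_cpow_mul_exp_neg_mul_Ioi hz2 (sq_nonneg _),
    inv_mul_cancel_left₀ (Gamma_ne_zero_of_re_pos hz2), neg_div]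
end

section
/- Let ν be a doubling measure on a metric space (M, d) with ν positive and finite on balls, and define ρ(x,y) = inf { ν(B) : B a ball containing both x and y }. Then ρ is a quasi-metric: there exists A ≥ 1 such that ρ(x,y) ≤ A (ρ(x,z) + ρ(z,y)) for all x, y, z, and moreover ρ(x,y) is comparable to ν(B(x, d(x,y))): there exist constants c, C > 0 with c ν(B(x, d(x,y))) ≤ ρ(x,y) ≤ C ν(B(x, d(x,y))). -/
open MeasureTheory Metric

/-- The measure quasi-distance `ρ(x,y) = inf { ν(B) : B a ball containing x and y }`. -/
noncomputable def measureDist {M : Type*} [PseudoMetricSpace M] [MeasurableSpace M]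
    (ν : Measure M) (x y : M) : ℝ :=
  sInf {v : ℝ | ∃ c : M, ∃ r : ℝ, x ∈ ball c r ∧ y ∈ ball c r ∧ v = (ν (ball c r)).toReal}

section Aux

variable {M : Type*} [PseudoMetricSpace M] [MeasurableSpace M] (ν : Measure M)

lemma mdSet_nonempty (x y : M) :
    {v : ℝ | ∃ c : M, ∃ r : ℝ, x ∈ ball c r ∧ y ∈ ball c r ∧
      v = (ν (ball c r)).toReal}.Nonempty := by
  refine ⟨_, x, dist y x + 1, ?_, ?_, rfl⟩
  · simp [mem_ball]
    linarith [dist_nonneg (x := y) (y := x)]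
  · simp [mem_ball]

lemma mdSet_bddBelow (x y : M) :
    BddBelow {v : ℝ | ∃ c : M, ∃ r : ℝ, x ∈ ball c r ∧ y ∈ ball c r ∧
      v = (ν (ball c r)).toReal} := by
  refine ⟨0, fun v hv => ?_⟩
  obtain ⟨c, r, _, _, hv⟩ := hv
  rw [hv]; exact ENNReal.toReal_nonneg

lemma measureDist_le {x y : M} {c : M} {r : ℝ} (hx : x ∈ ball c r) (hy : y ∈ ball c r) :
    measureDist ν x y ≤ (ν (ball c r)).toReal :=
  csInf_le (mdSet_bddBelow ν x y) ⟨c, r, hx, hy, rfl⟩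

lemma measureDist_nonneg (x y : M) : 0 ≤ measureDist ν x y :=
  le_csInf (mdSet_nonempty ν x y) (by
    rintro v ⟨c, r, _, _, rfl⟩
    exact ENNReal.toReal_nonneg)

lemma le_measureDist {x y : M} {b : ℝ}
    (h : ∀ c : M, ∀ r : ℝ, x ∈ ball c r → y ∈ ball c r → b ≤ (ν (ball c r)).toReal) :
    b ≤ measureDist ν x y := by
  refine le_csInf (mdSet_nonempty ν x y) ?_
  rintro v ⟨c, r, hx, hy, rfl⟩
  exact h c r hx hy

end Aux

lemma doub_four {M : Type*} [PseudoMetricSpace M] [MeasurableSpace M]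
    (ν : Measure M) (C_D : ℝ) (hC : 0 ≤ C_D)
    (hdoub : ∀ (x : M) (r : ℝ), (ν (ball x (2 * r))).toReal ≤ C_D * (ν (ball x r)).toReal)
    (c : M) (r : ℝ) :
    (ν (ball c (4 * r))).toReal ≤ C_D ^ 2 * (ν (ball c r)).toReal := by
  have h4 : (4 : ℝ) * r = 2 * (2 * r) := by ring
  have h1 := hdoub c (2 * r)
  have h2 := hdoub c r
  have hn : (0 : ℝ) ≤ (ν (ball c (2 * r))).toReal := ENNReal.toReal_nonneg
  have hn2 : (0 : ℝ) ≤ (ν (ball c (2 * (2 * r)))).toReal := ENNReal.toReal_nonneg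
  rw [h4]
  calc (ν (ball c (2 * (2 * r)))).toReal ≤ C_D * (ν (ball c (2 * r))).toReal := h1
    _ ≤ C_D * (C_D * (ν (ball c r)).toReal) := mul_le_mul_of_nonneg_left h2 hC
    _ = C_D ^ 2 * (ν (ball c r)).toReal := by ring

theorem stmt13 {M : Type*} [MetricSpace M] [MeasurableSpace M] [BorelSpace M]
    (ν : Measure M)
    (hpos : ∀ (x : M) (r : ℝ), 0 < r → 0 < ν (ball x r))
    (hfin : ∀ (x : M) (r : ℝ), ν (ball x r) < ⊤)
    (C_D : ℝ) (hC_D : 0 < C_D)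
    (hdoub : ∀ (x : M) (r : ℝ), (ν (ball x (2 * r))).toReal ≤ C_D * (ν (ball x r)).toReal) :
    (∃ A : ℝ, 1 ≤ A ∧ ∀ x y z : M,
        measureDist ν x y ≤ A * (measureDist ν x z + measureDist ν z y)) ∧
    (∃ c > 0, ∃ C > 0, ∀ x y : M, x ≠ y →
        c * (ν (ball x (dist x y))).toReal ≤ measureDist ν x y ∧
        measureDist ν x y ≤ C * (ν (ball x (dist x y))).toReal) := by
  have hD : (0 : ℝ) < C_D ^ 2 := by positivity
  constructor
  · -- quasi-triangle inequality with A = C_D^2 + 1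
    refine ⟨C_D ^ 2 + 1, by linarith, fun x y z => ?_⟩
    set D := C_D ^ 2 with hDdef
    have key2 : ∀ (c1 : M) (r1 : ℝ) (c2 : M) (r2 : ℝ),
        x ∈ ball c1 r1 → z ∈ ball c1 r1 → z ∈ ball c2 r2 → y ∈ ball c2 r2 →
        measureDist ν x y ≤ D * ((ν (ball c1 r1)).toReal + (ν (ball c2 r2)).toReal) := by
      intro c1 r1 c2 r2 hx1 hz1 hz2 hy2
      rw [mem_ball] at hx1 hz1 hz2 hy2
      have hr1 : 0 < r1 := lt_of_le_of_lt dist_nonneg hx1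
      have hr2 : 0 < r2 := lt_of_le_of_lt dist_nonneg hz2
      have hn1 : (0 : ℝ) ≤ (ν (ball c1 r1)).toReal := ENNReal.toReal_nonneg
      have hn2 : (0 : ℝ) ≤ (ν (ball c2 r2)).toReal := ENNReal.toReal_nonneg
      rcases le_total r2 r1 with hle | hle
      · have hx : x ∈ ball c1 (4 * r1) := by
          rw [mem_ball]; linarith
        have hy : y ∈ ball c1 (4 * r1) := by
          rw [mem_ball]
          have := dist_triangle4 y c2 z c1
          have h1 : dist c2 z = dist z c2 := dist_comm _ _
          linarith
        have := measureDist_le ν hx hy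
        have h4 := doub_four ν C_D hC_D.le hdoub c1 r1
        calc measureDist ν x y ≤ (ν (ball c1 (4 * r1))).toReal := this
          _ ≤ D * (ν (ball c1 r1)).toReal := h4
          _ ≤ D * ((ν (ball c1 r1)).toReal + (ν (ball c2 r2)).toReal) := by nlinarith
      · have hy : y ∈ ball c2 (4 * r2) := by
          rw [mem_ball]; linarith
        have hx : x ∈ ball c2 (4 * r2) := by
          rw [mem_ball]
          have := dist_triangle4 x c1 z c2
          have h1 : dist c1 z = dist z c1 := dist_comm _ _
          linarith
        have := measureDist_le ν hx hy
        have h4 := doub_four ν C_D hC_D.le hdoub c2 r2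
        calc measureDist ν x y ≤ (ν (ball c2 (4 * r2))).toReal := this
          _ ≤ D * (ν (ball c2 r2)).toReal := h4
          _ ≤ D * ((ν (ball c1 r1)).toReal + (ν (ball c2 r2)).toReal) := by nlinarith
    -- pass to infima
    have step1 : measureDist ν x y / D - measureDist ν z y ≤ measureDist ν x z := by
      refine le_measureDist ν (fun c1 r1 hx1 hz1 => ?_)
      have step0 : measureDist ν x y / D - (ν (ball c1 r1)).toReal ≤ measureDist ν z y := by
        refine le_measureDist ν (fun c2 r2 hz2 hy2 => ?_)
        have := key2 c1 r1 c2 r2 hx1 hz1 hz2 hy2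
        rw [sub_le_iff_le_add, div_le_iff₀ hD]
        nlinarith
      linarith
    rw [sub_le_iff_le_add, div_le_iff₀ hD] at step1
    have h0 : 0 ≤ measureDist ν x z + measureDist ν z y :=
      add_nonneg (measureDist_nonneg ν x z) (measureDist_nonneg ν z y)
    nlinarith
  · -- comparability
    refine ⟨1 / C_D ^ 2, by positivity, C_D, hC_D, fun x y hxy => ?_⟩
    have hd : 0 < dist x y := dist_pos.mpr hxy
    constructor
    · -- lower bound
      refine le_measureDist ν (fun c r hx hy => ?_)
      rw [mem_ball] at hx hy
      have hr : 0 < r := lt_of_le_of_lt dist_nonneg hx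
      have hsub : ball x (dist x y) ⊆ ball c (4 * r) := by
        intro w hw
        rw [mem_ball] at hw ⊢
        have h1 := dist_triangle w x c
        have h2 := dist_triangle x c y
        have h3 : dist c y = dist y c := dist_comm _ _
        linarith
      have hmono : (ν (ball x (dist x y))).toReal ≤ (ν (ball c (4 * r))).toReal :=
        ENNReal.toReal_mono (hfin c (4 * r)).ne (measure_mono hsub)
      have h4 := doub_four ν C_D hC_D.le hdoub c r
      rw [div_mul_eq_mul_div, one_mul, div_le_iff₀ hD]
      nlinarith
    · -- upper bound
      have hx : x ∈ ball x (2 * dist x y) := by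
        rw [mem_ball, dist_self]; linarith
      have hy : y ∈ ball x (2 * dist x y) := by
        rw [mem_ball, dist_comm]; linarith
      calc measureDist ν x y ≤ (ν (ball x (2 * dist x y))).toReal := measureDist_le ν hx hy
        _ ≤ C_D * (ν (ball x (dist x y))).toReal := hdoub x (dist x y)
end
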